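/- For the tangent linearization of the fixed point iteration u^{k+1} = u^k + A(u^k,D) R(u^k,D) with exact residual linearization but approximate linearization of A, the sensitivity error satisfies ε^{k+1} = ε^k + (∂A/∂u ε^k) R + A (∂R/∂u ε^k) + [(dA/dD − (dA/dD)~) − (∂A/∂u − (∂A/∂u)~) ε^k] R, so that ‖ε^{k+1}‖ ≤ ‖B‖‖ε^k‖ + ‖[(dA/dD − (dA/dD)~) − (∂A/∂u − (∂A/∂u)~) ε^k] R‖ where B = ∂N/∂u. -/
import Mathlib


/-- Tangent sensitivity error identity and bound for the fixed point iteration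
`u^{k+1} = u^k + A R`.  `s` and `t` are the exact and approximate state sensitivities
`du^k/dD`, `R` the residual, `dRdu = ∂R/∂u` (exact), `rD = (∂R/∂x)(dx/dD)` (exact),
`Dx`/`Dx'` the exact/approximate `(∂A/∂x)(dx/dD)` matrices, `dAdu`/`dAdu'` the
exact/approximate `∂A/∂u` (as linear maps from directions to matrices), and
`B : e ↦ e + (∂A/∂u e) R + A (∂R/∂u e)` the derivative of the fixed point iteration.
Then `ε^{k+1} = B ε^k + [(dA/dD − (dA/dD)~) − (∂A/∂u − (∂A/∂u)~) ε^k] R`, and hence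
`‖ε^{k+1}‖ ≤ ‖B‖ ‖ε^k‖ + ‖[(dA/dD − (dA/dD)~) − (∂A/∂u − (∂A/∂u)~) ε^k] R‖`. -/
theorem tangent_error_recurrence {E : Type*} [NormedAddCommGroup E] [NormedSpace ℝ E]
    [FiniteDimensional ℝ E]
    (A dRdu Dx Dx' : E →L[ℝ] E) (dAdu dAdu' : E →L[ℝ] (E →L[ℝ] E))
    (R rD s t s' t' : E)
    (hs' : s' = s + (Dx + dAdu s) R + A (dRdu s + rD))
    (ht' : t' = t + (Dx' + dAdu' t) R + A (dRdu t + rD))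
    (B : E →L[ℝ] E) (hB : ∀ e, B e = e + (dAdu e) R + A (dRdu e)) :
    s' - t' = B (s - t) + ((Dx + dAdu s) - (Dx' + dAdu' s)
        - ((dAdu (s - t)) - (dAdu' (s - t)))) R ∧
      ‖s' - t'‖ ≤ ‖B‖ * ‖s - t‖ + ‖((Dx + dAdu s) - (Dx' + dAdu' s)
        - ((dAdu (s - t)) - (dAdu' (s - t)))) R‖ := by
  have hid : s' - t' = B (s - t) + ((Dx + dAdu s) - (Dx' + dAdu' s)
        - ((dAdu (s - t)) - (dAdu' (s - t)))) R := by
    subst hs' ht'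
    rw [hB]
    simp only [map_sub, map_add, ContinuousLinearMap.sub_apply,
      ContinuousLinearMap.add_apply]
    abel
  refine ⟨hid, ?_⟩
  rw [hid]
  calc ‖B (s - t) + _‖ ≤ ‖B (s - t)‖ + ‖((Dx + dAdu s) - (Dx' + dAdu' s)
        - ((dAdu (s - t)) - (dAdu' (s - t)))) R‖ := norm_add_le _ _
    _ ≤ ‖B‖ * ‖s - t‖ + _ := by gcongr; exact B.le_opNorm _
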